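/- arXiv:0904.1119 — 6 statements merged into one kernel-verified Lean document; each statement's English description precedes it below -/
import Mathlib

section
/- Let T > 0, δ > 0, 0 ≤ s ≤ T, and let g : [0,T] → [0,∞) be measurable with ∫_0^T g(t)² dt < ∞. Then ∫_s^T g(t) (δ² + ∫_0^t g(r)² dr)^{−1/2} dt ≤ √T · (log((δ² + ∫_0^T g(r)² dr)/(δ² + ∫_0^s g(r)² dr)))^{1/2}. -/
/-!
Put `F t = δ² + ∫₀ᵗ g²`. As an indefinite integral, `F` is absolutely continuous with `F' = g²`
almost everywhere, and `F ≥ δ² > 0`, so `log ∘ F` is absolutely continuous with derivative `g² / F`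
almost everywhere. The fundamental theorem of calculus for absolutely continuous functions gives
`∫ₛᵀ g² / F = log (F T / F s)`, and Cauchy–Schwarz on `[s, T]` gives
`∫ₛᵀ g / √F ≤ √(T - s) · (∫ₛᵀ g² / F)^{1/2}`.
-/

open MeasureTheory Set Filter
open scoped NNReal Interval

theorem LipschitzOnWith.comp_absolutelyContinuousOnInterval {X Y : Type*} [PseudoMetricSpace X]
    [PseudoMetricSpace Y] {φ : X → Y} {K : ℝ≥0} {u : Set X} {f : ℝ → X} {a b : ℝ}
    (hφ : LipschitzOnWith K φ u) (hf : AbsolutelyContinuousOnInterval f a b)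
    (hfu : MapsTo f (uIcc a b) u) : AbsolutelyContinuousOnInterval (φ ∘ f) a b := by
  have hK := (tendsto_const_nhds (x := (K : ℝ))).mul hf
  rw [mul_zero] at hK
  refine squeeze_zero' (Eventually.of_forall fun E => Finset.sum_nonneg fun _ _ => dist_nonneg)
    ?_ hK
  filter_upwards [mem_inf_of_right (mem_principal_self _)] with E hE
  rw [Finset.mul_sum]
  exact Finset.sum_le_sum fun i hi => hφ.dist_le_mul _ (hfu (hE.1 i hi).1) _ (hfu (hE.1 i hi).2)

theorem Real.lipschitzOnWith_log_Ici {m : ℝ} (hm : 0 < m) :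
    LipschitzOnWith (Real.toNNReal m⁻¹) Real.log (Ici m) := by
  refine (convex_Ici m).lipschitzOnWith_of_nnnorm_hasDerivWithin_le
    (fun x hx => (Real.hasDerivAt_log (hm.trans_le hx).ne').hasDerivWithinAt) fun x hx => ?_
  rw [← NNReal.coe_le_coe, coe_nnnorm, Real.coe_toNNReal _ (inv_nonneg.2 hm.le),
    Real.norm_of_nonneg (inv_nonneg.2 (hm.trans_le hx).le)]
  exact inv_anti₀ hm hx

section LogDerivative

variable {f F : ℝ → ℝ} {a b : ℝ}

theorem AbsolutelyContinuousOnInterval.log (hF : AbsolutelyContinuousOnInterval F a b)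
    (hpos : ∀ t ∈ uIcc a b, 0 < F t) :
    AbsolutelyContinuousOnInterval (fun t => Real.log (F t)) a b := by
  obtain ⟨t₀, ht₀, hmin⟩ := isCompact_uIcc.exists_isMinOn nonempty_uIcc hF.continuousOn
  exact (Real.lipschitzOnWith_log_Ici (hpos t₀ ht₀)).comp_absolutelyContinuousOnInterval hF
    fun t ht => hmin ht

theorem deriv_log_ae_eq_div (hpos : ∀ t ∈ uIcc a b, 0 < F t)
    (hderiv : ∀ᵐ t, t ∈ uIcc a b → HasDerivAt F (f t) t) :
    deriv (fun t => Real.log (F t)) =ᵐ[volume.restrict (Ι a b)] fun t => f t / F t := by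
  rw [EventuallyEq, ae_restrict_iff' measurableSet_uIoc]
  filter_upwards [hderiv] with t ht hmem
  exact ((ht (uIoc_subset_uIcc hmem)).log (hpos t (uIoc_subset_uIcc hmem)).ne').deriv

theorem intervalIntegrable_div_of_ae_hasDerivAt (hF : AbsolutelyContinuousOnInterval F a b)
    (hpos : ∀ t ∈ uIcc a b, 0 < F t) (hderiv : ∀ᵐ t, t ∈ uIcc a b → HasDerivAt F (f t) t) :
    IntervalIntegrable (fun t => f t / F t) volume a b :=
  (hF.log hpos).intervalIntegrable_deriv.congr_ae (deriv_log_ae_eq_div hpos hderiv)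

theorem integral_div_eq_log_sub_log (hF : AbsolutelyContinuousOnInterval F a b)
    (hpos : ∀ t ∈ uIcc a b, 0 < F t) (hderiv : ∀ᵐ t, t ∈ uIcc a b → HasDerivAt F (f t) t) :
    ∫ t in a..b, f t / F t = Real.log (F b) - Real.log (F a) := by
  rw [← (hF.log hpos).integral_deriv_eq_sub]
  exact (intervalIntegral.integral_congr_ae_restrict (deriv_log_ae_eq_div hpos hderiv)).symm

end LogDerivative

theorem integral_le_sqrt_measureReal_mul_sqrt_integral_sq {α : Type*} [MeasurableSpace α]
    {μ : Measure α} [IsFiniteMeasure μ] {h : α → ℝ} (hh : MemLp h 2 μ) :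
    ∫ x, h x ∂μ ≤ √(μ.real univ) * √(∫ x, h x ^ 2 ∂μ) := by
  have hholder := integral_mul_norm_le_Lp_mul_Lq Real.HolderConjugate.two_two
    (by simpa using hh) (memLp_const (1 : ℝ))
  simp only [norm_one, one_pow, mul_one, integral_const, smul_eq_mul, Real.norm_eq_abs,
    Real.rpow_two, sq_abs, ← Real.sqrt_eq_rpow] at hholder
  rw [mul_comm]
  exact (le_abs_self _).trans (abs_integral_le_integral_abs.trans hholder)

theorem intervalIntegral.integral_le_sqrt_mul_sqrt_integral_sq {h : ℝ → ℝ} {a b : ℝ}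
    (hab : a ≤ b) (hm : AEStronglyMeasurable h (volume.restrict (Ioc a b)))
    (hsq : IntervalIntegrable (fun t => h t ^ 2) volume a b) :
    ∫ t in a..b, h t ≤ √(b - a) * √(∫ t in a..b, h t ^ 2) := by
  rw [intervalIntegral.integral_of_le hab, intervalIntegral.integral_of_le hab]
  convert integral_le_sqrt_measureReal_mul_sqrt_integral_sq
    ((memLp_two_iff_integrable_sq hm).2 hsq.1) using 3
  simp [hab]

theorem cauchy_schwarz_log_estimate_general (T δ s : ℝ) (hδ : 0 < δ)
    (hs : 0 ≤ s) (hsT : s ≤ T) (g : ℝ → ℝ) (hgm : Measurable g)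
    (hint : IntegrableOn (fun t => g t ^ 2) (Icc 0 T)) :
    ∫ t in s..T, g t / Real.sqrt (δ ^ 2 + ∫ r in (0:ℝ)..t, g r ^ 2) ≤
      Real.sqrt T * Real.sqrt (Real.log
        ((δ ^ 2 + ∫ r in (0:ℝ)..T, g r ^ 2) / (δ ^ 2 + ∫ r in (0:ℝ)..s, g r ^ 2))) := by
  set F : ℝ → ℝ := fun t => δ ^ 2 + ∫ r in (0:ℝ)..t, g r ^ 2
  have hsub : uIcc s T ⊆ uIcc 0 T :=
    uIcc_subset_uIcc ⟨by simp [hs], by simp [hsT]⟩ right_mem_uIcc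
  have hg2 : IntervalIntegrable (fun t => g t ^ 2) volume 0 T :=
    (intervalIntegrable_iff_integrableOn_Icc_of_le (hs.trans hsT)).2 hint
  have hF : AbsolutelyContinuousOnInterval F s T :=
    ((LipschitzWith.const _).lipschitzOnWith.absolutelyContinuousOnInterval.add
      (hg2.absolutelyContinuousOnInterval_intervalIntegral left_mem_uIcc)).mono hsub
  have hFpos : ∀ t ∈ uIcc s T, 0 < F t := fun t ht => by
    have : 0 ≤ ∫ r in (0:ℝ)..t, g r ^ 2 := intervalIntegral.integral_nonneg
      (hs.trans ((uIcc_of_le hsT).subset ht).1) fun r _ => sq_nonneg (g r)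
    positivity
  have hderiv : ∀ᵐ t, t ∈ uIcc s T → HasDerivAt F (g t ^ 2) t := by
    filter_upwards [hg2.ae_hasDerivAt_integral] with t ht hmem
    exact (ht (hsub hmem) 0 left_mem_uIcc).const_add _
  have hm : AEStronglyMeasurable (fun t => g t / √(F t)) (volume.restrict (Ioc s T)) :=
    hgm.aestronglyMeasurable.div₀ <|
      ((uIcc_of_le hsT ▸ hF.continuousOn).sqrt.aestronglyMeasurable measurableSet_Icc).mono_measure
        (Measure.restrict_mono Ioc_subset_Icc_self le_rfl)
  have hsq : EqOn (fun t => (g t / √(F t)) ^ 2) (fun t => g t ^ 2 / F t) (uIcc s T) :=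
    fun t ht => by simp only [div_pow, Real.sq_sqrt (hFpos t ht).le]
  calc ∫ t in s..T, g t / √(F t)
      ≤ √(T - s) * √(∫ t in s..T, (g t / √(F t)) ^ 2) :=
        intervalIntegral.integral_le_sqrt_mul_sqrt_integral_sq hsT hm
          ((intervalIntegrable_congr (hsq.mono uIoc_subset_uIcc)).2
            (intervalIntegrable_div_of_ae_hasDerivAt hF hFpos hderiv))
    _ = √(T - s) * √(Real.log (F T / F s)) := by
        rw [intervalIntegral.integral_congr hsq, integral_div_eq_log_sub_log hF hFpos hderiv,
          Real.log_div (hFpos T right_mem_uIcc).ne' (hFpos s left_mem_uIcc).ne']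
    _ ≤ √T * √(Real.log (F T / F s)) := by gcongr; linarith

/-- An elementary Cauchy–Schwarz / logarithmic-derivative estimate:
`∫_s^T g(t) (δ² + ∫_0^t g²)^{-1/2} dt ≤ √T (log((δ² + ∫_0^T g²)/(δ² + ∫_0^s g²)))^{1/2}`. -/
theorem cauchy_schwarz_log_estimate (T δ s : ℝ) (hT : 0 < T) (hδ : 0 < δ)
    (hs : 0 ≤ s) (hsT : s ≤ T) (g : ℝ → ℝ) (hg : ∀ t, 0 ≤ g t) (hgm : Measurable g)
    (hint : IntegrableOn (fun t => g t ^ 2) (Icc 0 T)) :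
    ∫ t in s..T, g t / Real.sqrt (δ ^ 2 + ∫ r in (0:ℝ)..t, g r ^ 2) ≤
      Real.sqrt T * Real.sqrt (Real.log
        ((δ ^ 2 + ∫ r in (0:ℝ)..T, g r ^ 2) / (δ ^ 2 + ∫ r in (0:ℝ)..s, g r ^ 2))) :=
  cauchy_schwarz_log_estimate_general T δ s hδ hs hsT g hgm hint
end

section
/- Fix T > 0 and A > 0. There exist constants C > 0 and δ₀ ∈ (0,1), depending only on T and A, with the following property. Let F : ℝ^d → ℝ^d with ‖F‖_{L^∞} ≤ A, let (X,V) and (X^δ,V^δ) be two flow solutions of Newton's system with force F satisfying |V(0,x,v) − V^δ(0,x,v)| ≤ |δ|, and let δ ∈ ℝ^{2d} with 0 < |δ| ≤ δ₀. Then for every (x,v) and every 0 ≤ s ≤ T, ∫_s^T |V(t,x,v) − V^δ(t,x,v)| / √(A_δ(t,x,v)) dt ≤ C (log(1/|δ|))^{1/2}. -/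
/-!
Write `φ = V - V^δ` and `g(t) = |δ|² + ∫₀ᵗ |φ|²`, so that `g ≤ A_δ` and `g' = |φ|²`. Then
`∫ₛᵀ |φ|² / g = log (g T / g s)`, which is `O(log (1/|δ|))` because `g s ≥ |δ|²` and `g T` is
bounded: `|φ| ≤ |δ| + 2 A t` since both velocities integrate forces bounded by `A`.
Cauchy–Schwarz against `1` on `[s, T]` turns this into the bound on `∫ₛᵀ |φ| / √A_δ`.
-/

open MeasureTheory Set
open scoped BigOperators

noncomputable section

abbrev Euc (d : ℕ) : Type := EuclideanSpace ℝ (Fin d)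

/-- `(X, V)` solves Newton's system `∂ₜX = V`, `∂ₜV = F(X)` for every initial
datum `(x, v)` (in the locally absolutely continuous / integral sense). -/
def IsPointwiseFlowSolution (d : ℕ) (F : Euc d → Euc d)
    (X V : ℝ → Euc d → Euc d → Euc d) : Prop :=
  ∀ x v : Euc d,
    (∀ t : ℝ, IntervalIntegrable (fun s => V s x v) volume 0 t) ∧
    (∀ t : ℝ, IntervalIntegrable (fun s => F (X s x v)) volume 0 t) ∧
    (∀ t : ℝ, X t x v = X 0 x v + ∫ s in (0:ℝ)..t, V s x v) ∧
    (∀ t : ℝ, V t x v = V 0 x v + ∫ s in (0:ℝ)..t, F (X s x v))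

/-- The quantity `A_δ(t,x,v)`. -/
def Adelta (d : ℕ) (X V Xd Vd : ℝ → Euc d → Euc d → Euc d) (δ : Euc d × Euc d)
    (t : ℝ) (x v : Euc d) : ℝ :=
  ‖δ‖ ^ 2 + (⨆ s ∈ Icc (0:ℝ) t, ‖X s x v - Xd s x v‖ ^ 2)
    + ∫ s in (0:ℝ)..t, ‖V s x v - Vd s x v‖ ^ 2

open Real

theorem intervalIntegral_le_sqrt_of_sq_le {f q : ℝ → ℝ} {s T L : ℝ} (hsT : s ≤ T)
    (hq : IntervalIntegrable q volume s T) (hfq : ∀ t ∈ Icc s T, f t ^ 2 ≤ q t)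
    (hqL : ∫ t in s..T, q t ≤ L) (hL : 0 < L) :
    ∫ t in s..T, f t ≤ √((T - s) * L) := by
  rcases hsT.eq_or_lt with rfl | hlt
  · simp
  by_cases hf : IntervalIntegrable f volume s T
  swap
  · rw [intervalIntegral.integral_undef hf]
    positivity
  set r := √((T - s) * L)
  have hr : 0 < r := sqrt_pos.2 (by nlinarith)
  have hr2 : r ^ 2 = (T - s) * L := sq_sqrt (by nlinarith)
  set lam := r / (T - s)
  have hlam : 0 < lam := div_pos hr (sub_pos.2 hlt)
  -- AM–GM with the weight `lam` that balances the two resulting terms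
  have hpt : ∀ t ∈ Icc s T, f t ≤ q t / (2 * lam) + lam / 2 := fun t ht => by
    have := two_mul_le_add_sq (f t) lam
    rw [div_add_div _ _ (by positivity) two_ne_zero, le_div_iff₀ (by positivity)]
    nlinarith [hfq t ht]
  calc ∫ t in s..T, f t ≤ ∫ t in s..T, (q t / (2 * lam) + lam / 2) :=
        intervalIntegral.integral_mono_on hsT hf (hq.div_const _ |>.add intervalIntegrable_const)
          hpt
    _ = (∫ t in s..T, q t) / (2 * lam) + (T - s) * (lam / 2) := by
        rw [intervalIntegral.integral_add (hq.div_const _) intervalIntegrable_const,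
          intervalIntegral.integral_div, intervalIntegral.integral_const, smul_eq_mul]
    _ ≤ L / (2 * lam) + (T - s) * (lam / 2) := by gcongr
    _ = r := by
        simp only [lam]
        field_simp
        nlinarith [hr2]

theorem integral_div_const_add_primitive_eq_log {h : ℝ → ℝ} {c s T : ℝ} (hh : Continuous h)
    (hpos : ∀ t ∈ uIcc s T, 0 < c + ∫ u in (0:ℝ)..t, h u) :
    ∫ t in s..T, h t / (c + ∫ u in (0:ℝ)..t, h u) =
      log (c + ∫ u in (0:ℝ)..T, h u) - log (c + ∫ u in (0:ℝ)..s, h u) := by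
  have hg : Continuous fun t => c + ∫ u in (0:ℝ)..t, h u :=
    continuous_const.add (intervalIntegral.continuous_primitive hh.intervalIntegrable 0)
  refine intervalIntegral.integral_eq_sub_of_hasDerivAt
    (f := fun t => log (c + ∫ u in (0:ℝ)..t, h u)) (fun t ht => ?_)
    (hh.continuousOn.div hg.continuousOn fun t ht => (hpos t ht).ne').intervalIntegrable
  exact (((hh.integral_hasStrictDerivAt 0 t).hasDerivAt).const_add c).log (hpos t ht).ne'

theorem integral_div_primitive_le_three_log {h : ℝ → ℝ} {ε s T : ℝ} (hh : Continuous h)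
    (h0 : ∀ t, 0 ≤ h t) (hε : 0 < ε) (hT : ε ^ 2 + ∫ u in (0:ℝ)..T, h u ≤ 1 / ε)
    (hs : 0 ≤ s) (hsT : s ≤ T) :
    ∫ t in s..T, h t / (ε ^ 2 + ∫ u in (0:ℝ)..t, h u) ≤ 3 * log (1 / ε) := by
  have hge : ∀ t, 0 ≤ t → ε ^ 2 ≤ ε ^ 2 + ∫ u in (0:ℝ)..t, h u := fun t ht =>
    le_add_of_nonneg_right (intervalIntegral.integral_nonneg ht fun u _ => h0 u)
  rw [integral_div_const_add_primitive_eq_log hh fun t ht =>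
    (pow_pos hε 2).trans_le (hge t (hs.trans (uIcc_of_le hsT ▸ ht).1))]
  have hlogT : log (ε ^ 2 + ∫ u in (0:ℝ)..T, h u) ≤ log (1 / ε) :=
    log_le_log ((pow_pos hε 2).trans_le (hge T (hs.trans hsT))) hT
  have hlogs : log (ε ^ 2) ≤ log (ε ^ 2 + ∫ u in (0:ℝ)..s, h u) :=
    log_le_log (pow_pos hε 2) (hge s hs)
  rw [log_pow, one_div, log_inv] at *
  push_cast at hlogs
  linarith

theorem integral_norm_div_sqrt_le {E : Type*} [NormedAddCommGroup E] {φ : ℝ → E}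
    {a : ℝ → ℝ} {ε M s T : ℝ} (hφ : Continuous φ) (hM : ∀ t ∈ Icc 0 T, ‖φ t‖ ≤ M)
    (hε : 0 < ε) (hεM : ε ≤ 1 / (2 + T * M ^ 2))
    (ha : ∀ t ∈ Icc s T, ε ^ 2 + ∫ u in (0:ℝ)..t, ‖φ u‖ ^ 2 ≤ a t) (hs : 0 ≤ s) (hsT : s ≤ T) :
    ∫ t in s..T, ‖φ t‖ / √(a t) ≤ √(3 * T) * √(log (1 / ε)) := by
  set g : ℝ → ℝ := fun t => ε ^ 2 + ∫ u in (0:ℝ)..t, ‖φ u‖ ^ 2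
  have hT : 0 ≤ T := hs.trans hsT
  have hh : Continuous fun t => ‖φ t‖ ^ 2 := hφ.norm.pow 2
  have hεK : ε * (2 + T * M ^ 2) ≤ 1 := by
    rwa [le_div_iff₀ (by positivity)] at hεM
  have hε1 : ε < 1 := by nlinarith [mul_nonneg hT (sq_nonneg M)]
  have hgT : g T ≤ 1 / ε := by
    have hint : ∫ u in (0:ℝ)..T, ‖φ u‖ ^ 2 ≤ T * M ^ 2 := by
      simpa using intervalIntegral.integral_mono_on hT (hh.intervalIntegrable 0 T)
        (intervalIntegrable_const (μ := volume)) fun t ht => pow_le_pow_left₀ (norm_nonneg _) (hM t ht) 2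
    rw [le_div_iff₀ hε]
    nlinarith [mul_le_mul_of_nonneg_left hint hε.le, pow_le_one₀ hε.le hε1.le (n := 2)]
  have hgpos : ∀ t ∈ Icc s T, 0 < g t := fun t ht =>
    add_pos_of_pos_of_nonneg (pow_pos hε 2)
      (intervalIntegral.integral_nonneg (hs.trans ht.1) fun u _ => sq_nonneg _)
  have hlog : 0 < log (1 / ε) := log_pos (by rw [lt_div_iff₀ hε]; linarith)
  calc ∫ t in s..T, ‖φ t‖ / √(a t) ≤ √((T - s) * (3 * log (1 / ε))) := by
        refine intervalIntegral_le_sqrt_of_sq_le (q := fun t => ‖φ t‖ ^ 2 / g t) hsT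
          ((hh.continuousOn.div (by fun_prop) fun t ht => (hgpos t ?_).ne').intervalIntegrable)
          (fun t ht => ?_)
          (integral_div_primitive_le_three_log hh (fun _ => sq_nonneg _) hε hgT hs hsT)
          (by positivity)
        · rwa [uIcc_of_le hsT] at ht
        · rw [div_pow, sq_sqrt ((hgpos t ht).le.trans (ha t ht))]
          exact div_le_div_of_nonneg_left (sq_nonneg _) (hgpos t ht) (ha t ht)
    _ ≤ √(3 * T) * √(log (1 / ε)) := by
        rw [← sqrt_mul (by positivity)]
        exact sqrt_le_sqrt (by nlinarith)

theorem le_Adelta {d : ℕ} (X V Xd Vd : ℝ → Euc d → Euc d → Euc d) (δ : Euc d × Euc d)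
    (t : ℝ) (x v : Euc d) :
    ‖δ‖ ^ 2 + ∫ s in (0:ℝ)..t, ‖V s x v - Vd s x v‖ ^ 2 ≤ Adelta d X V Xd Vd δ t x v := by
  have : 0 ≤ ⨆ s ∈ Icc (0:ℝ) t, ‖X s x v - Xd s x v‖ ^ 2 :=
    iSup_nonneg fun _ => iSup_nonneg fun _ => sq_nonneg _
  rw [Adelta]
  linarith

namespace IsPointwiseFlowSolution

variable {d : ℕ} {F G : Euc d → Euc d} {X V Y W : ℝ → Euc d → Euc d → Euc d}

theorem continuous_velocity (hXV : IsPointwiseFlowSolution d F X V) (x v : Euc d) :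
    Continuous fun t => V t x v := by
  obtain ⟨-, hF, -, hV⟩ := hXV x v
  exact (continuous_const.add (intervalIntegral.continuous_primitive
    (fun a b => (hF a).symm.trans (hF b)) 0)).congr fun t => (hV t).symm

theorem norm_velocity_sub_le {A : ℝ} (hF : ∀ y, ‖F y‖ ≤ A) (hG : ∀ y, ‖G y‖ ≤ A)
    (hXV : IsPointwiseFlowSolution d F X V) (hYW : IsPointwiseFlowSolution d G Y W)
    (x v : Euc d) (t : ℝ) :
    ‖V t x v - W t x v‖ ≤ ‖V 0 x v - W 0 x v‖ + 2 * A * |t| := by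
  obtain ⟨-, hFX, -, hV⟩ := hXV x v
  obtain ⟨-, hGY, -, hW⟩ := hYW x v
  have hdiff : V t x v - W t x v = (V 0 x v - W 0 x v)
      + ∫ u in (0:ℝ)..t, (F (X u x v) - G (Y u x v)) := by
    rw [hV t, hW t, intervalIntegral.integral_sub (hFX t) (hGY t)]
    abel
  have hforce : ‖∫ u in (0:ℝ)..t, (F (X u x v) - G (Y u x v))‖ ≤ 2 * A * |t - 0| :=
    intervalIntegral.norm_integral_le_of_norm_le_const fun u _ =>
      (norm_sub_le _ _).trans (by linarith [hF (X u x v), hG (Y u x v)])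
  rw [hdiff, sub_zero] at *
  exact (norm_add_le _ _).trans (by linarith)

end IsPointwiseFlowSolution

theorem lemma_velocity_log_bound_general (T A : ℝ) (hT : 0 < T) :
    ∃ C > (0:ℝ), ∃ δ₀ ∈ Ioo (0:ℝ) 1,
      ∀ (d : ℕ) (F : Euc d → Euc d), (∀ y, ‖F y‖ ≤ A) →
      ∀ X V Xd Vd : ℝ → Euc d → Euc d → Euc d,
        IsPointwiseFlowSolution d F X V → IsPointwiseFlowSolution d F Xd Vd →
        (∀ x v : Euc d, X 0 x v = x ∧ V 0 x v = v) →
        ∀ δ : Euc d × Euc d, (∀ x v : Euc d, ‖V 0 x v - Vd 0 x v‖ ≤ ‖δ‖) →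
        0 < ‖δ‖ → ‖δ‖ ≤ δ₀ →
        ∀ x v : Euc d, ∀ s : ℝ, 0 ≤ s → s ≤ T →
          ∫ t in s..T, ‖V t x v - Vd t x v‖ / Real.sqrt (Adelta d X V Xd Vd δ t x v) ≤
            C * Real.sqrt (Real.log (1 / ‖δ‖)) := by
  have hK : 1 < 2 + T * (1 + 2 * A * T) ^ 2 := by nlinarith [sq_nonneg (1 + 2 * A * T)]
  refine ⟨√(3 * T), by positivity, 1 / (2 + T * (1 + 2 * A * T) ^ 2),
    ⟨by positivity, (div_lt_one (by linarith)).2 hK⟩, ?_⟩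
  intro d F hF X V Xd Vd hXV hXdVd _ δ hδ0 hδpos hδle x v s hs hsT
  have hA : 0 ≤ A := (norm_nonneg _).trans (hF 0)
  have hδ1 : ‖δ‖ ≤ 1 := hδle.trans ((div_le_one (by linarith)).2 hK.le)
  refine integral_norm_div_sqrt_le ((hXV.continuous_velocity x v).sub
    (hXdVd.continuous_velocity x v)) (fun t ht => ?_) hδpos hδle
    (fun t _ => le_Adelta X V Xd Vd δ t x v) hs hsT
  calc ‖V t x v - Vd t x v‖ ≤ ‖V 0 x v - Vd 0 x v‖ + 2 * A * |t| :=
        hXV.norm_velocity_sub_le hF hF hXdVd x v t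
    _ ≤ 1 + 2 * A * T := by
        rw [abs_of_nonneg ht.1]
        gcongr
        exacts [(hδ0 x v).trans hδ1, ht.2]

/-- Lemma 1: `∫_s^T |V_t - V^δ_t| / √(A_δ(t,x,v)) dt ≤ C (log 1/|δ|)^{1/2}`,
with `C` and `δ₀` depending only on `T` and `A`. -/
theorem lemma_velocity_log_bound (T A : ℝ) (hT : 0 < T) (hA : 0 < A) :
    ∃ C > (0:ℝ), ∃ δ₀ ∈ Ioo (0:ℝ) 1,
      ∀ (d : ℕ) (F : Euc d → Euc d), (∀ y, ‖F y‖ ≤ A) →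
      ∀ X V Xd Vd : ℝ → Euc d → Euc d → Euc d,
        IsPointwiseFlowSolution d F X V → IsPointwiseFlowSolution d F Xd Vd →
        (∀ x v : Euc d, X 0 x v = x ∧ V 0 x v = v) →
        ∀ δ : Euc d × Euc d, (∀ x v : Euc d, ‖V 0 x v - Vd 0 x v‖ ≤ ‖δ‖) →
        0 < ‖δ‖ → ‖δ‖ ≤ δ₀ →
        ∀ x v : Euc d, ∀ s : ℝ, 0 ≤ s → s ≤ T →
          ∫ t in s..T, ‖V t x v - Vd t x v‖ / Real.sqrt (Adelta d X V Xd Vd δ t x v) ≤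
            C * Real.sqrt (Real.log (1 / ‖δ‖)) :=
  lemma_velocity_log_bound_general T A hT
end
end

section
/- Let T > 0 and let f : [0,T] → ℝ be Lipschitz continuous. Then the running maximum m(t) := max_{0 ≤ s ≤ t} f(s)² is Lipschitz continuous on [0,T], and for almost every t ∈ [0,T] its derivative satisfies m'(t) ≤ 2 |f(t)| |f'(t)| ≤ 4 |f(t)|² + 4 |f'(t)|². -/
/-!
Write `g = f²` and `m` for its running maximum. For `x ≤ y` every value of `g` on `[x, y]` is at
most `g x + K (y - x) ≤ m x + K (y - x)`, so `m` inherits the Lipschitz constant of `g`, and `g`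
is Lipschitz because `f` is bounded. By Rademacher's theorem `f` and `m` are differentiable a.e.
At such a point `t > 0`, either `m t = g t`, and then the left difference quotients of `m` are
dominated by those of `g`, giving `m' t ≤ g' t = 2 f t f' t`; or `m t > g t`, and then the
maximum over `[0, t]` is attained at some `c < t`, so `m` is constant on `[c, t]` and `m' t = 0`.
-/

open MeasureTheory Set Filter Topology
open scoped NNReal

lemma LipschitzOnWith.sq {α : Type*} [PseudoMetricSpace α] {f : α → ℝ} {s : Set α}
    {K B : ℝ≥0} (hf : LipschitzOnWith K f s) (hB : ∀ x ∈ s, |f x| ≤ B) :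
    LipschitzOnWith (2 * B * K) (fun x => f x ^ 2) s := by
  refine LipschitzOnWith.of_dist_le_mul fun x hx y hy => ?_
  have hsum : |f x + f y| ≤ 2 * B := by
    linarith [abs_add_le (f x) (f y), hB x hx, hB y hy]
  calc dist (f x ^ 2) (f y ^ 2) = |f x + f y| * dist (f x) (f y) := by
        rw [Real.dist_eq, Real.dist_eq, ← abs_mul]; ring_nf
    _ ≤ 2 * B * (K * dist x y) := by gcongr; exact hf.dist_le_mul x hx y hy
    _ = ↑(2 * B * K) * dist x y := by push_cast; ring

noncomputable def runningMax (g : ℝ → ℝ) (a t : ℝ) : ℝ := sSup (g '' Icc a t)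

section RunningMax

variable {g : ℝ → ℝ} {a b s t x y : ℝ}

lemma le_runningMax (hg : BddAbove (g '' Icc a t)) (hs : s ∈ Icc a t) :
    g s ≤ runningMax g a t :=
  le_csSup hg (mem_image_of_mem g hs)

lemma runningMax_mono (hg : BddAbove (g '' Icc a y)) (hx : a ≤ x) (hxy : x ≤ y) :
    runningMax g a x ≤ runningMax g a y :=
  csSup_le_csSup hg ((nonempty_Icc.2 hx).image g) (image_mono (Icc_subset_Icc_right hxy))

lemma runningMax_le_add_mul {K : ℝ≥0} (hg : LipschitzOnWith K g (Icc a y)) (hx : a ≤ x)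
    (hxy : x ≤ y) : runningMax g a y ≤ runningMax g a x + K * (y - x) := by
  have hbdd : BddAbove (g '' Icc a x) :=
    isCompact_Icc.bddAbove_image (hg.continuousOn.mono (Icc_subset_Icc_right hxy))
  have hgx : g x ≤ runningMax g a x := le_runningMax hbdd ⟨hx, le_rfl⟩
  refine csSup_le ((nonempty_Icc.2 (hx.trans hxy)).image g) ?_
  rintro _ ⟨s, hs, rfl⟩
  rcases le_total s x with hsx | hxs
  · have := le_runningMax hbdd ⟨hs.1, hsx⟩
    have : (0 : ℝ) ≤ K * (y - x) := mul_nonneg K.2 (sub_nonneg.2 hxy)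
    linarith
  · calc g s ≤ g x + K * dist s x := hg.le_add_mul hs ⟨hx, hxy⟩
      _ ≤ runningMax g a x + K * (y - x) := by
        rw [Real.dist_eq, abs_of_nonneg (sub_nonneg.2 hxs)]
        gcongr
        exact hs.2

lemma LipschitzOnWith.runningMax {K : ℝ≥0} (hg : LipschitzOnWith K g (Icc a b)) :
    LipschitzOnWith K (runningMax g a) (Icc a b) := by
  refine LipschitzOnWith.of_le_add_mul K fun x hx y hy => ?_
  rcases le_total x y with hxy | hyx
  · have := runningMax_mono (isCompact_Icc.bddAbove_image
      (hg.continuousOn.mono (Icc_subset_Icc_right hy.2))) hx.1 hxy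
    have : (0 : ℝ) ≤ K * dist x y := mul_nonneg K.2 dist_nonneg
    linarith
  · rw [Real.dist_eq, abs_of_nonneg (sub_nonneg.2 hyx)]
    exact runningMax_le_add_mul (hg.mono (Icc_subset_Icc_right hx.2)) hy.1 hyx

lemma exists_runningMax_eqOn_Icc_of_lt (hg : ContinuousOn g (Icc a t)) (hat : a ≤ t)
    (hlt : g t < runningMax g a t) :
    ∃ c < t, ∀ x ∈ Icc c t, runningMax g a x = runningMax g a t := by
  have hbdd : BddAbove (g '' Icc a t) := isCompact_Icc.bddAbove_image hg
  obtain ⟨c, hc, hgc⟩ : runningMax g a t ∈ g '' Icc a t :=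
    (isCompact_Icc.image_of_continuousOn hg).sSup_mem ((nonempty_Icc.2 hat).image g)
  have hct : c < t := lt_of_le_of_ne hc.2 fun h => by subst h; exact hlt.ne hgc
  refine ⟨c, hct, fun x hx => le_antisymm (runningMax_mono hbdd (hc.1.trans hx.1) hx.2) ?_⟩
  rw [← hgc]
  exact le_runningMax (isCompact_Icc.bddAbove_image (hg.mono (Icc_subset_Icc_right hx.2)))
    ⟨hc.1, hx.1⟩

lemma le_abs_of_hasDerivWithinAt_runningMax (hg : ContinuousOn g (Icc a t)) (hat : a < t)
    {m' g' : ℝ} (hm : HasDerivWithinAt (runningMax g a) m' (Icc a t) t)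
    (hgd : HasDerivWithinAt g g' (Icc a t) t) : m' ≤ |g'| := by
  have hslope {φ : ℝ → ℝ} {φ' : ℝ} (h : HasDerivWithinAt φ φ' (Icc a t) t) :
      Tendsto (slope φ t) (𝓝[Ico a t] t) (𝓝 φ') := by
    rwa [hasDerivWithinAt_iff_tendsto_slope, Icc_sdiff_right] at h
  have := right_nhdsWithin_Ico_neBot hat
  by_cases hc : runningMax g a t ≤ g t
  · refine le_trans (le_of_tendsto_of_tendsto (hslope hm) (hslope hgd)
      (eventually_nhdsWithin_of_forall fun x hx => ?_)) (le_abs_self g')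
    have hgx : g x ≤ runningMax g a x :=
      le_runningMax (isCompact_Icc.bddAbove_image (hg.mono (Icc_subset_Icc_right hx.2.le)))
        ⟨hx.1, le_rfl⟩
    rw [slope_def_field, slope_def_field]
    exact div_le_div_of_nonpos_of_le (by linarith [hx.2]) (by linarith)
  · obtain ⟨c, hct, hconst⟩ := exists_runningMax_eqOn_Icc_of_lt hg hat.le (not_le.1 hc)
    have hslope0 : slope (runningMax g a) t =ᶠ[𝓝[Ico a t] t] fun _ => 0 := by
      filter_upwards [self_mem_nhdsWithin, nhdsWithin_le_nhds (Ioi_mem_nhds hct)] with x hx hcx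
      rw [slope_def_field, hconst x ⟨le_of_lt hcx, hx.2.le⟩, sub_self, zero_div]
    rw [tendsto_nhds_unique (hslope hm) (tendsto_const_nhds.congr' hslope0.symm)]
    exact abs_nonneg g'

end RunningMax

theorem running_max_lipschitz_and_deriv_bound_general (T : ℝ)
    (f : ℝ → ℝ) (K : NNReal) (hf : LipschitzOnWith K f (Icc 0 T)) :
    (∃ K' : NNReal,
      LipschitzOnWith K' (fun t => sSup ((fun s => f s ^ 2) '' Icc 0 t)) (Icc 0 T)) ∧
    ∃ f' m' : ℝ → ℝ, ∀ᵐ t ∂(volume.restrict (Icc 0 T)),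
      HasDerivWithinAt f (f' t) (Icc 0 T) t ∧
      HasDerivWithinAt (fun u => sSup ((fun s => f s ^ 2) '' Icc 0 u)) (m' t) (Icc 0 T) t ∧
      m' t ≤ 2 * |f t| * |f' t| ∧
      2 * |f t| * |f' t| ≤ 4 * |f t| ^ 2 + 4 * |f' t| ^ 2 := by
  obtain ⟨B, hB⟩ := isCompact_Icc.exists_bound_of_continuousOn hf.continuousOn
  have hg := hf.sq (B := B.toNNReal) fun x hx => (hB x hx).trans (Real.le_coe_toNNReal B)
  have hm := hg.runningMax
  refine ⟨⟨_, hm⟩, derivWithin f (Icc 0 T), derivWithin (runningMax (f · ^ 2) 0) (Icc 0 T),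
    ?_⟩
  filter_upwards [hf.ae_differentiableWithinAt measurableSet_Icc,
    hm.ae_differentiableWithinAt measurableSet_Icc, ae_restrict_mem measurableSet_Icc,
    ae_restrict_of_ae (volume.ae_ne 0)] with t hfd hmd ht ht0
  have hft := hfd.hasDerivWithinAt
  refine ⟨hft, hmd.hasDerivWithinAt, ?_,
    by nlinarith [sq_nonneg (|f t| - |derivWithin f (Icc 0 T) t|)]⟩
  have hsub : Icc 0 t ⊆ Icc 0 T := Icc_subset_Icc_right ht.2
  have hderiv := le_abs_of_hasDerivWithinAt_runningMax (hg.continuousOn.mono hsub)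
    (lt_of_le_of_ne ht.1 (Ne.symm ht0)) (hmd.hasDerivWithinAt.mono hsub) ((hft.mono hsub).pow 2)
  simpa [abs_mul] using hderiv

/-- The running maximum `m(t) = max_{0 ≤ s ≤ t} f(s)²` of a Lipschitz function `f` on
`[0,T]` is Lipschitz, and a.e. its derivative satisfies
`m'(t) ≤ 2|f(t)||f'(t)| ≤ 4|f(t)|² + 4|f'(t)|²`. -/
theorem running_max_lipschitz_and_deriv_bound (T : ℝ) (hT : 0 < T)
    (f : ℝ → ℝ) (K : NNReal) (hf : LipschitzOnWith K f (Icc 0 T)) :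
    (∃ K' : NNReal,
      LipschitzOnWith K' (fun t => sSup ((fun s => f s ^ 2) '' Icc 0 t)) (Icc 0 T)) ∧
    ∃ f' m' : ℝ → ℝ, ∀ᵐ t ∂(volume.restrict (Icc 0 T)),
      HasDerivWithinAt f (f' t) (Icc 0 T) t ∧
      HasDerivWithinAt (fun u => sSup ((fun s => f s ^ 2) '' Icc 0 u)) (m' t) (Icc 0 T) t ∧
      m' t ≤ 2 * |f t| * |f' t| ∧
      2 * |f t| * |f' t| ≤ 4 * |f t| ^ 2 + 4 * |f' t| ^ 2 :=
  running_max_lipschitz_and_deriv_bound_general T f K hf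
end

section
/- Let d ≥ 2 and x, y ∈ ℝ^d with x ≠ y. Let H = {h ∈ ℝ^d : h·(x−y) = 0} and define F_{x,y}(θ,h) = θ(x − y + 4(1−θ)h) on [0,1] × {h ∈ H : |h| ≤ |x−y|}. Then: (i) F_{x,y} maps its domain onto K(x−y); (ii) F_{x,y} restricted to (0,1) × {h ∈ H : |h| ≤ |x−y|} is injective, with inverse given on z in its image by θ(z) = (z·(x−y))/|x−y|² and h(z) = (z − θ(z)(x−y))/(4 θ(z)(1−θ(z))); (iii) for every θ ∈ (0,1) and h in the domain, the absolute value of the Jacobian determinant of F_{x,y} (as a map from (0,1) × H, H being a (d−1)-dimensional hyperplane) at (θ,h) equals (4θ(1−θ))^{d−1} |x−y|. -/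
/-!
Write `w = x - y`. Since `h ⊥ w`, the `w`-component of `F(θ, h)` is `θ‖w‖²` and the remainder
is `4θ(1-θ) h`, which gives the explicit inverse. The Jacobian columns are
`∂θ F = w + 4(1-2θ) h` and `4θ(1-θ) b_l` for an orthonormal basis `(b_l)` of `w^⊥`. As `h ∈ w^⊥`
lies in the span of the `b_l`, the `h`-term of the first column does not change the determinant,
which is therefore `(4θ(1-θ))^(d-1)` times the volume `‖w‖` of the frame `(w, b)`.
-/

open MeasureTheory Set
open scoped InnerProductSpace

noncomputable section

/-- The cone `K(w)`. -/
def Kcone (d : ℕ) (w : Euc d) : Set (Euc d) :=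
  {z | ∃ θ ∈ Icc (0:ℝ) 1, ∃ h : Euc d,
    ⟪h, w⟫_ℝ = 0 ∧ ‖h‖ ≤ ‖w‖ ∧ z = θ • (w + (4 * (1 - θ)) • h)}

/-- The change of variables `F_{x,y}(θ,h) = θ(x − y + 4(1−θ)h)`. -/
def Fxy (d : ℕ) (x y : Euc d) (q : ℝ × Euc d) : Euc d :=
  q.1 • ((x - y) + (4 * (1 - q.1)) • q.2)

section OptionElim

variable {ι R M N : Type*}

lemma update_optionElim_none [DecidableEq ι] (v v' : M) (g : ι → M) :
    Function.update (fun j : Option ι => j.elim v g) none v' = fun j => j.elim v' g := by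
  funext j; cases j <;> simp

lemma AlternatingMap.map_optionElim_smul_none [CommSemiring R] [AddCommMonoid M] [Module R M]
    [AddCommMonoid N] [Module R N] (f : M [⋀^Option ι]→ₗ[R] N) (c : R) (v : M) (g : ι → M) :
    f (fun j => j.elim (c • v) g) = c • f (fun j => j.elim v g) := by
  classical
  rw [← update_optionElim_none 0, f.map_update_smul, update_optionElim_none]

lemma AlternatingMap.map_optionElim_add_smul [Field R] [AddCommGroup M] [Module R M]
    [AddCommGroup N] [Module R N] (f : M [⋀^Option ι]→ₗ[R] N) (v u : M) (a : R) (g : ι → M)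
    (hu : ¬LinearIndependent R fun j : Option ι => j.elim u g) :
    f (fun j => j.elim (v + a • u) g) = f (fun j => j.elim v g) := by
  classical
  have h0 := f.map_linearDependent _ hu
  rw [← update_optionElim_none 0 (v + a • u), f.map_update_add, f.map_update_smul,
    update_optionElim_none, update_optionElim_none, h0, smul_zero, add_zero]

variable [Fintype ι]

lemma AlternatingMap.map_optionElim_smul_some [CommSemiring R] [AddCommMonoid M] [Module R M]
    [AddCommMonoid N] [Module R N] (f : M [⋀^Option ι]→ₗ[R] N) (v : M) (c : R) (g : ι → M) :
    f (fun j => j.elim v fun l => c • g l) = c ^ Fintype.card ι • f (fun j => j.elim v g) := by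
  have hprod : ∏ j : Option ι, (j.elim 1 fun _ => c : R) = c ^ Fintype.card ι := by
    simp [Fintype.prod_option]
  rw [← hprod, ← f.map_smul_univ]
  congr 1; funext j; cases j <;> simp

lemma not_linearIndependent_optionElim_of_mem [DivisionRing R] [AddCommGroup M] [Module R M]
    {S : Submodule R M} (b : Module.Basis ι R S) {u : M} (hu : u ∈ S) :
    ¬LinearIndependent R fun j : Option ι => j.elim u fun l => (b l : M) := by
  intro hli
  have hliS : LinearIndependent R fun j : Option ι => j.elim ⟨u, hu⟩ b :=
    LinearIndependent.of_comp S.subtype (by convert hli with j; cases j <;> rfl)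
  have := Module.Finite.of_basis b
  have hcard := hliS.fintype_card_le_finrank
  rw [Module.finrank_eq_card_basis b, Fintype.card_option] at hcard
  omega

end OptionElim

section InnerProductSpace

variable {ι E : Type*} [NormedAddCommGroup E] [InnerProductSpace ℝ E]

lemma Orthonormal.optionElim {e : E} {g : ι → E} (hg : Orthonormal ℝ g) (he : ‖e‖ = 1)
    (heg : ∀ l, ⟪e, g l⟫_ℝ = 0) : Orthonormal ℝ fun j : Option ι => j.elim e g := by
  classical
  rw [orthonormal_iff_ite] at hg ⊢
  rintro (_ | i) (_ | j)
  · simp [he]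
  · simp [heg]
  · simp [real_inner_comm, heg]
  · simpa using hg i j

variable [Fintype ι] [DecidableEq ι]

lemma OrthonormalBasis.abs_det_of_orthonormal [Nonempty ι] (β : OrthonormalBasis ι ℝ E)
    {v : ι → E} (hv : Orthonormal ℝ v) : |β.toBasis.det v| = 1 := by
  have hcard : Fintype.card ι = Module.finrank ℝ E :=
    (Module.finrank_eq_card_basis β.toBasis).symm
  let B := basisOfLinearIndependentOfCardEqFinrank hv.linearIndependent hcard
  have hB : ⇑B = v := coe_basisOfLinearIndependentOfCardEqFinrank _ _
  have := β.det_to_matrix_orthonormalBasis (B.toOrthonormalBasis (hB ▸ hv))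
  rwa [Module.Basis.coe_toOrthonormalBasis, hB, Real.norm_eq_abs] at this

lemma OrthonormalBasis.abs_det_optionElim_orthogonal (β : OrthonormalBasis (Option ι) ℝ E)
    {w : E} (hw : w ≠ 0) (b : OrthonormalBasis ι ℝ (ℝ ∙ w)ᗮ) {h : E} (hh : h ∈ (ℝ ∙ w)ᗮ)
    (a c : ℝ) :
    |β.toBasis.det fun j => j.elim (w + a • h) fun l => c • (b l : E)| =
      |c| ^ Fintype.card ι * ‖w‖ := by
  have hwn : ‖w‖ ≠ 0 := norm_ne_zero_iff.mpr hw
  set e := ‖w‖⁻¹ • w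
  have hw_eq : w = ‖w‖ • e := (smul_inv_smul₀ hwn w).symm
  have he : ‖e‖ = 1 := by simp [e, norm_smul, hwn]
  have heb : ∀ l, ⟪e, (b l : E)⟫_ℝ = 0 := fun l => by
    simp [e, real_inner_smul_left, Submodule.mem_orthogonal_singleton_iff_inner_right.mp (b l).2]
  have hdep := not_linearIndependent_optionElim_of_mem b.toBasis hh
  simp only [OrthonormalBasis.coe_toBasis] at hdep
  have hframe : |β.toBasis.det fun j => j.elim e fun l => (b l : E)| = 1 :=
    β.abs_det_of_orthonormal
      ((b.orthonormal.comp_linearIsometry (ℝ ∙ w)ᗮ.subtypeₗᵢ).optionElim he heb)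
  have hscale : (β.toBasis.det fun j => j.elim w fun l => (b l : E)) =
      ‖w‖ • β.toBasis.det fun j => j.elim e fun l => (b l : E) := by
    rw [← AlternatingMap.map_optionElim_smul_none, ← hw_eq]
  rw [AlternatingMap.map_optionElim_smul_some,
    AlternatingMap.map_optionElim_add_smul _ _ _ _ _ hdep, hscale,
    smul_eq_mul, smul_eq_mul, abs_mul, abs_mul, hframe, abs_pow, abs_norm, mul_one]

end InnerProductSpace

section Fxy

variable {d : ℕ} {x y h : Euc d} {θ : ℝ}

lemma image_Fxy_eq_Kcone (d : ℕ) (x y : Euc d) :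
    Fxy d x y '' (Icc (0:ℝ) 1 ×ˢ {h : Euc d | ⟪h, x - y⟫_ℝ = 0 ∧ ‖h‖ ≤ ‖x - y‖}) =
      Kcone d (x - y) := by
  ext z
  constructor
  · rintro ⟨⟨θ, h⟩, ⟨hθ, hh, hle⟩, rfl⟩
    exact ⟨θ, hθ, h, hh, hle, rfl⟩
  · rintro ⟨θ, hθ, h, hh, hle, rfl⟩
    exact ⟨(θ, h), ⟨hθ, hh, hle⟩, rfl⟩

lemma inner_Fxy_sub (hh : ⟪h, x - y⟫_ℝ = 0) :
    ⟪Fxy d x y (θ, h), x - y⟫_ℝ = θ * ‖x - y‖ ^ 2 := by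
  rw [Fxy, real_inner_smul_left, inner_add_left, real_inner_smul_left, hh,
    real_inner_self_eq_norm_sq]
  ring

lemma Fxy_sub_smul : Fxy d x y (θ, h) - θ • (x - y) = (4 * θ * (1 - θ)) • h := by
  simp only [Fxy]
  rw [smul_add, add_sub_cancel_left, smul_smul]
  ring_nf

lemma inner_Fxy_div_norm_sq (hxy : x ≠ y) (hh : ⟪h, x - y⟫_ℝ = 0) :
    ⟪Fxy d x y (θ, h), x - y⟫_ℝ / ‖x - y‖ ^ 2 = θ := by
  have : ‖x - y‖ ≠ 0 := norm_ne_zero_iff.mpr (sub_ne_zero.mpr hxy)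
  rw [inner_Fxy_sub hh]
  field_simp

lemma inv_smul_Fxy_sub (hθ : θ ∈ Ioo 0 1) :
    (4 * θ * (1 - θ))⁻¹ • (Fxy d x y (θ, h) - θ • (x - y)) = h := by
  have : 4 * θ * (1 - θ) ≠ 0 := by nlinarith [hθ.1, hθ.2]
  rw [Fxy_sub_smul, inv_smul_smul₀ this]

lemma Fxy_injOn (hxy : x ≠ y) : InjOn (Fxy d x y) (Ioo 0 1 ×ˢ {h | ⟪h, x - y⟫_ℝ = 0}) := by
  rintro ⟨θ₁, h₁⟩ ⟨hθ₁, hh₁⟩ ⟨θ₂, h₂⟩ ⟨-, hh₂⟩ heq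
  obtain rfl : θ₁ = θ₂ := by
    rw [← inner_Fxy_div_norm_sq (θ := θ₁) hxy hh₁, heq, inner_Fxy_div_norm_sq hxy hh₂]
  rw [← inv_smul_Fxy_sub (h := h₁) hθ₁, heq, inv_smul_Fxy_sub hθ₁]

end Fxy

theorem Fxy_properties_general (d : ℕ) (x y : Euc d) (hxy : x ≠ y) :
    -- (i) surjectivity onto the cone
    (Fxy d x y '' (Icc (0:ℝ) 1 ×ˢ
        {h : Euc d | ⟪h, x - y⟫_ℝ = 0 ∧ ‖h‖ ≤ ‖x - y‖}) = Kcone d (x - y)) ∧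
    -- (ii) injectivity and explicit inverse
    (InjOn (Fxy d x y) (Ioo (0:ℝ) 1 ×ˢ
        {h : Euc d | ⟪h, x - y⟫_ℝ = 0 ∧ ‖h‖ ≤ ‖x - y‖})) ∧
    (∀ θ ∈ Ioo (0:ℝ) 1, ∀ h : Euc d, ⟪h, x - y⟫_ℝ = 0 → ‖h‖ ≤ ‖x - y‖ →
      ⟪Fxy d x y (θ, h), x - y⟫_ℝ / ‖x - y‖ ^ 2 = θ ∧
      (4 * θ * (1 - θ))⁻¹ • (Fxy d x y (θ, h) - θ • (x - y)) = h) ∧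
    -- (iii) the Jacobian determinant
    (∀ (β : OrthonormalBasis (Option (Fin (d - 1))) ℝ (Euc d))
        (b : OrthonormalBasis (Fin (d - 1)) ℝ
          ((ℝ ∙ (x - y))ᗮ : Submodule ℝ (Euc d))),
      ∀ θ ∈ Ioo (0:ℝ) 1, ∀ h : Euc d, ⟪h, x - y⟫_ℝ = 0 → ‖h‖ ≤ ‖x - y‖ →
        |(Matrix.of (fun i j : Option (Fin (d - 1)) =>
            β.repr (j.elim ((x - y) + (4 * (1 - 2 * θ)) • h)
              (fun l => (4 * θ * (1 - θ)) • ((b l : Euc d)))) i)).det| =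
          (4 * θ * (1 - θ)) ^ (d - 1) * ‖x - y‖) := by
  refine ⟨image_Fxy_eq_Kcone d x y,
    (Fxy_injOn hxy).mono (prod_mono subset_rfl fun h hh => hh.1),
    fun θ hθ h hh _ => ⟨inner_Fxy_div_norm_sq hxy hh, inv_smul_Fxy_sub hθ⟩, ?_⟩
  intro β b θ hθ h hh _
  have hc : 0 < 4 * θ * (1 - θ) := by nlinarith [hθ.1, hθ.2]
  have hmem : h ∈ (ℝ ∙ (x - y))ᗮ :=
    Submodule.mem_orthogonal_singleton_iff_inner_right.mpr (by rwa [real_inner_comm])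
  have hdet := β.abs_det_optionElim_orthogonal (sub_ne_zero.mpr hxy) b hmem
    (4 * (1 - 2 * θ)) (4 * θ * (1 - θ))
  rwa [Fintype.card_fin, abs_of_pos hc, Module.Basis.det_apply] at hdet

/-- Properties of the change of variables `F_{x,y}`: (i) it maps
`[0,1] × {h ∈ H : |h| ≤ |x−y|}` onto `K(x−y)`; (ii) it is injective on
`(0,1) × {h ∈ H : |h| ≤ |x−y|}` with the explicit inverse
`θ(z) = z·(x−y)/|x−y|²`, `h(z) = (z − θ(z)(x−y))/(4θ(z)(1−θ(z)))`;
(iii) in any orthonormal coordinates (on `H` and on `ℝ^d`) its Jacobian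
determinant has absolute value `(4θ(1−θ))^{d−1} |x−y|`. -/
theorem Fxy_properties (d : ℕ) (hd : 2 ≤ d) (x y : Euc d) (hxy : x ≠ y) :
    -- (i) surjectivity onto the cone
    (Fxy d x y '' (Icc (0:ℝ) 1 ×ˢ
        {h : Euc d | ⟪h, x - y⟫_ℝ = 0 ∧ ‖h‖ ≤ ‖x - y‖}) = Kcone d (x - y)) ∧
    -- (ii) injectivity and explicit inverse
    (InjOn (Fxy d x y) (Ioo (0:ℝ) 1 ×ˢ
        {h : Euc d | ⟪h, x - y⟫_ℝ = 0 ∧ ‖h‖ ≤ ‖x - y‖})) ∧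
    (∀ θ ∈ Ioo (0:ℝ) 1, ∀ h : Euc d, ⟪h, x - y⟫_ℝ = 0 → ‖h‖ ≤ ‖x - y‖ →
      ⟪Fxy d x y (θ, h), x - y⟫_ℝ / ‖x - y‖ ^ 2 = θ ∧
      (4 * θ * (1 - θ))⁻¹ • (Fxy d x y (θ, h) - θ • (x - y)) = h) ∧
    -- (iii) the Jacobian determinant
    (∀ (β : OrthonormalBasis (Option (Fin (d - 1))) ℝ (Euc d))
        (b : OrthonormalBasis (Fin (d - 1)) ℝ
          ((ℝ ∙ (x - y))ᗮ : Submodule ℝ (Euc d))),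
      ∀ θ ∈ Ioo (0:ℝ) 1, ∀ h : Euc d, ⟪h, x - y⟫_ℝ = 0 → ‖h‖ ≤ ‖x - y‖ →
        |(Matrix.of (fun i j : Option (Fin (d - 1)) =>
            β.repr (j.elim ((x - y) + (4 * (1 - 2 * θ)) • h)
              (fun l => (4 * θ * (1 - θ)) • ((b l : Euc d)))) i)).det| =
          (4 * θ * (1 - θ)) ^ (d - 1) * ‖x - y‖) :=
  Fxy_properties_general d x y hxy
end
end

section
/- Let d ≥ 2. There exists a constant C_d > 0 such that for every w ∈ ℝ^d with w ≠ 0, ∫_{K(w)} |z|^{−(d−1)} dz ≤ C_d |w|, where the integral is with respect to Lebesgue measure on ℝ^d. -/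
/-!
Every point of `K(w)` has norm at most `|w| + 4|h| ≤ 5|w|`, so it suffices to integrate
`|z|^{-(d-1)}` over the ball of radius `5|w|`. The kernel is locally integrable since
`d - 1 < d`, and it is homogeneous of degree `-(d-1)`, so scaling the ball by `|w|` multiplies
its integral by `|w|^d · |w|^{-(d-1)} = |w|`.
-/

open MeasureTheory Set
open scoped InnerProductSpace ENNReal

noncomputable section

open Metric Module
open scoped Pointwise

section NormRpow

variable {E : Type*} [NormedAddCommGroup E] [NormedSpace ℝ E] [FiniteDimensional ℝ E]
  [MeasurableSpace E] [BorelSpace E] {μ : Measure E} [μ.IsAddHaarMeasure]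

theorem integrableOn_closedBall_norm_rpow_neg (hE : 1 ≤ finrank ℝ E) {α : ℝ}
    (hα : α < finrank ℝ E) (r : ℝ) :
    IntegrableOn (fun x : E ↦ ‖x‖ ^ (-α)) (closedBall 0 r) μ :=
  (locallyIntegrable_of_norm_le_rpow (C := 1) hE hα
    (ae_of_all _ fun x ↦ by simp [abs_of_nonneg (Real.rpow_nonneg (norm_nonneg x) _)])
    (measurable_norm.pow_const _).aestronglyMeasurable).integrableOn_isCompact
      (isCompact_closedBall 0 r)

theorem setIntegral_closedBall_mul_norm_rpow {R : ℝ} (hR : 0 < R) (r p : ℝ) :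
    ∫ x in closedBall (0 : E) (R * r), ‖x‖ ^ p ∂μ =
      R ^ ((finrank ℝ E : ℝ) + p) * ∫ x in closedBall (0 : E) r, ‖x‖ ^ p ∂μ := by
  have hball : R • closedBall (0 : E) r = closedBall 0 (R * r) := by
    rw [smul_closedBall' hR.ne', smul_zero, Real.norm_of_nonneg hR.le]
  have hscale := Measure.setIntegral_comp_smul_of_pos μ (fun x : E ↦ ‖x‖ ^ p) (closedBall 0 r) hR
  simp only [norm_smul, Real.norm_of_nonneg hR.le, Real.mul_rpow hR.le (norm_nonneg _),
    integral_const_mul, hball, smul_eq_mul] at hscale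
  rw [Real.rpow_add hR, Real.rpow_natCast, mul_assoc, hscale, mul_inv_cancel_left₀]
  positivity

end NormRpow

theorem Kcone_subset_closedBall (d : ℕ) (w : Euc d) :
    Kcone d w ⊆ closedBall 0 (5 * ‖w‖) := by
  rintro z ⟨θ, ⟨hθ0, hθ1⟩, h, -, hh, rfl⟩
  have h4 : 0 ≤ 4 * (1 - θ) := by linarith
  rw [mem_closedBall_zero_iff, norm_smul, Real.norm_of_nonneg hθ0]
  calc θ * ‖w + (4 * (1 - θ)) • h‖ ≤ 1 * (‖w‖ + 4 * (1 - θ) * ‖h‖) := by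
        gcongr
        exact (norm_add_le _ _).trans_eq (by rw [norm_smul, Real.norm_of_nonneg h4])
    _ ≤ 5 * ‖w‖ := by nlinarith [norm_nonneg h]

/-- The singular integral `∫_{K(w)} |z|^{-(d-1)} dz` is bounded by `C_d |w|`. -/
theorem cone_singular_integral_bound (d : ℕ) (hd : 2 ≤ d) :
    ∃ C > (0:ℝ), ∀ w : Euc d, w ≠ 0 →
      ∫⁻ z in Kcone d w, ENNReal.ofReal (‖z‖ ^ (-((d : ℝ) - 1))) ∂volume ≤
        ENNReal.ofReal (C * ‖w‖) := by
  have hdim : finrank ℝ (Euc d) = d := finrank_euclideanSpace_fin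
  have hint (r : ℝ) : IntegrableOn (fun z : Euc d ↦ ‖z‖ ^ (-((d : ℝ) - 1))) (closedBall 0 r) :=
    integrableOn_closedBall_norm_rpow_neg (by omega) (by simp [hdim]) r
  set J := ∫ z in closedBall (0 : Euc d) 5, ‖z‖ ^ (-((d : ℝ) - 1))
  have hJ : 0 ≤ J := setIntegral_nonneg measurableSet_closedBall fun z _ ↦ by positivity
  refine ⟨J + 1, by positivity, fun w hw ↦ ?_⟩
  have hw_pos : 0 < ‖w‖ := norm_pos_iff.2 hw
  calc ∫⁻ z in Kcone d w, ENNReal.ofReal (‖z‖ ^ (-((d : ℝ) - 1)))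
      ≤ ∫⁻ z in closedBall 0 (‖w‖ * 5), ENNReal.ofReal (‖z‖ ^ (-((d : ℝ) - 1))) :=
        lintegral_mono_set (by simpa [mul_comm] using Kcone_subset_closedBall d w)
    _ = ENNReal.ofReal (‖w‖ * J) := by
        rw [← ofReal_integral_eq_lintegral_ofReal (hint _) (ae_of_all _ fun z ↦ by positivity),
          setIntegral_closedBall_mul_norm_rpow hw_pos, hdim,
          show (d : ℝ) + -((d : ℝ) - 1) = 1 by ring, Real.rpow_one]
    _ ≤ ENNReal.ofReal ((J + 1) * ‖w‖) := ENNReal.ofReal_le_ofReal (by nlinarith)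
end
end

section
/- Let φ : ℝ → ℝ be C² with φ'(y) ≥ 1/2 for all y and φ(0) = 0. Let x < 0 (so that φ(x) < 0) and set v = √(−2φ(x)) > 0. Let (X,V) be the solution of Ẋ = V, V̇ = −φ'(X) with X(0) = x, V(0) = v. Then t₀ := ∫_x^0 dy/√(−2φ(y)) is finite, V(t) > 0 and V(t)² + 2φ(X(t)) = 0 for all t ∈ [0,t₀), X is strictly increasing on [0,t₀], X(t₀) = 0, and V(t₀) = 0; that is, t₀ is the first time at which the velocity vanishes. -/
open MeasureTheory Set

/-!
Since `V̇ = -φ'(X) ≤ -1/2`, the velocity decreases strictly and vanishes at a unique time `T`,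
and energy conservation forces `X(T) = 0`. On `[0, T)` the speed is `V = √(-2φ(X))`, so the
monotone substitution `y = X(s)` turns `∫_x^0 dy/√(-2φ(y))` into `∫_0^T V(s)/V(s) ds = T`;
this proves at once that the integral converges and that it equals the turning time `T`.
-/

theorem conservation_of_energy {φ X V : ℝ → ℝ} (hφ : Differentiable ℝ φ)
    (hX : ∀ t, HasDerivAt X (V t) t) (hV : ∀ t, HasDerivAt V (-deriv φ (X t)) t) (t : ℝ) :
    V t ^ 2 + 2 * φ (X t) = V 0 ^ 2 + 2 * φ (X 0) := by
  have hE : ∀ s, HasDerivAt (fun s => V s ^ 2 + 2 * φ (X s)) 0 s := fun s => by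
    have := ((hV s).fun_pow 2).fun_add (((hφ (X s)).hasDerivAt.comp s (hX s)).const_mul 2)
    exact this.congr_deriv (by norm_num; ring)
  exact is_const_of_deriv_eq_zero (fun s => (hE s).differentiableAt) (fun s => (hE s).deriv) t 0

theorem exists_first_zero_of_hasDerivAt_le_neg {V V' : ℝ → ℝ} {c : ℝ} (hc : 0 < c)
    (hV : ∀ t, HasDerivAt V (V' t) t) (hV' : ∀ t, V' t ≤ -c) (h0 : 0 < V 0) :
    ∃ T, 0 < T ∧ V T = 0 ∧ ∀ t ∈ Ico 0 T, 0 < V t := by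
  have hVd : Differentiable ℝ V := fun t => (hV t).differentiableAt
  have hderiv : ∀ t, deriv V t ≤ -c := fun t => (hV t).deriv ▸ hV' t
  have hanti : StrictAnti V := strictAnti_of_deriv_neg fun t => (hderiv t).trans_lt (by linarith)
  have hτ : 0 ≤ V 0 / c := by positivity
  have hVτ : V (V 0 / c) ≤ 0 := by
    have := image_sub_le_mul_sub_of_deriv_le hVd hderiv hτ
    field_simp at this
    linarith
  obtain ⟨T, hT, hVT⟩ := intermediate_value_Icc' hτ hVd.continuous.continuousOn ⟨hVτ, h0.le⟩
  have hT0 : T ≠ 0 := by rintro rfl; exact h0.ne' hVT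
  exact ⟨T, lt_of_le_of_ne hT.1 (Ne.symm hT0), hVT, fun t ht => hVT ▸ hanti ht.2⟩

section TravelTime

variable {X V w : ℝ → ℝ} {T : ℝ}

theorem inv_comp_mul_eqOn_one (hV : ∀ t ∈ Ioo 0 T, 0 < V t)
    (hw : ∀ t ∈ Ioo 0 T, w (X t) = V t) :
    EqOn (fun t => (w (X t))⁻¹ * V t) 1 (Ioo 0 T) := fun t ht => by
  simp [hw t ht, (hV t ht).ne']

theorem intervalIntegrable_inv_speed (hT : 0 ≤ T) (hXc : ContinuousOn X (Icc 0 T))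
    (hX : ∀ t ∈ Ioo 0 T, HasDerivAt X (V t) t) (hV : ∀ t ∈ Ioo 0 T, 0 < V t)
    (hw : ∀ t ∈ Ioo 0 T, w (X t) = V t) :
    IntervalIntegrable (fun y => (w y)⁻¹) volume (X 0) (X T) := by
  rw [← uIcc_of_le hT] at hXc
  have hI : Ioo (min 0 T) (max 0 T) = Ioo 0 T := by rw [min_eq_left hT, max_eq_right hT]
  refine (intervalIntegral.integrable_comp_mul_deriv_iff_of_deriv_nonneg hXc (hI ▸ hX)
    (hI ▸ fun t ht => (hV t ht).le)).1 ?_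
  refine (intervalIntegrable_const (c := (1 : ℝ))).congr_uIoo ?_
  rw [uIoo_of_le hT]
  exact (inv_comp_mul_eqOn_one hV hw).symm

theorem integral_inv_speed_eq_time (hT : 0 ≤ T) (hXc : ContinuousOn X (Icc 0 T))
    (hX : ∀ t ∈ Ioo 0 T, HasDerivAt X (V t) t) (hV : ∀ t ∈ Ioo 0 T, 0 < V t)
    (hw : ∀ t ∈ Ioo 0 T, w (X t) = V t) :
    ∫ y in X 0..X T, (w y)⁻¹ = T := by
  rw [← uIcc_of_le hT] at hXc
  have hI : Ioo (min 0 T) (max 0 T) = Ioo 0 T := by rw [min_eq_left hT, max_eq_right hT]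
  rw [← intervalIntegral.integral_comp_mul_deriv_of_deriv_nonneg hXc (hI ▸ hX)
    (hI ▸ fun t ht => (hV t ht).le), intervalIntegral.integral_congr_uIoo (g := 1)]
  · simp
  · rw [uIoo_of_le hT]
    exact inv_comp_mul_eqOn_one hV hw

end TravelTime

theorem one_dimensional_turning_time_general (φ : ℝ → ℝ)
    (hφ' : ∀ y : ℝ, (1/2 : ℝ) ≤ deriv φ y) (hφ0 : φ 0 = 0)
    (x : ℝ) (hx : x < 0) (X V : ℝ → ℝ)
    (hX0 : X 0 = x) (hV0 : V 0 = Real.sqrt (-2 * φ x))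
    (hXd : ∀ t : ℝ, HasDerivAt X (V t) t)
    (hVd : ∀ t : ℝ, HasDerivAt V (-(deriv φ (X t))) t)
    (t₀ : ℝ) (ht₀ : t₀ = ∫ y in x..(0:ℝ), (Real.sqrt (-2 * φ y))⁻¹) :
    IntervalIntegrable (fun y => (Real.sqrt (-2 * φ y))⁻¹) volume x 0 ∧
    0 < V 0 ∧
    (∀ t ∈ Ico (0:ℝ) t₀, 0 < V t ∧ V t ^ 2 + 2 * φ (X t) = 0) ∧
    StrictMonoOn X (Icc 0 t₀) ∧
    X t₀ = 0 ∧ V t₀ = 0 := by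
  have hφ'pos : ∀ y, 0 < deriv φ y := fun y => by linarith [hφ' y]
  have hφmono : StrictMono φ := strictMono_of_deriv_pos hφ'pos
  have hφx : φ x < 0 := hφ0 ▸ hφmono hx
  -- `deriv` is `0` wherever `φ` is not differentiable
  have hφd : Differentiable ℝ φ := fun y => differentiableAt_of_deriv_ne_zero (hφ'pos y).ne'
  have hE : ∀ t, V t ^ 2 + 2 * φ (X t) = 0 := fun t => by
    rw [conservation_of_energy hφd hXd hVd, hX0, hV0, Real.sq_sqrt (by linarith)]
    ring
  obtain ⟨T, hT, hVT, hVpos⟩ := exists_first_zero_of_hasDerivAt_le_neg (by norm_num : (0:ℝ) < 1/2)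
    hVd (fun t => neg_le_neg (hφ' (X t))) (hV0 ▸ Real.sqrt_pos.2 (by linarith))
  have hXT : X T = 0 := hφmono.injective (by linarith [hE T, sq_eq_zero_iff.2 hVT])
  have hXc : ContinuousOn X (Icc 0 T) := fun t _ => (hXd t).continuousAt.continuousWithinAt
  have hVpos' : ∀ t ∈ Ioo 0 T, 0 < V t := fun t ht => hVpos t (Ioo_subset_Ico_self ht)
  have hspeed : ∀ t ∈ Ioo 0 T, Real.sqrt (-2 * φ (X t)) = V t := fun t ht => by
    rw [show -2 * φ (X t) = V t ^ 2 by linarith [hE t], Real.sqrt_sq (hVpos' t ht).le]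
  have hint := intervalIntegrable_inv_speed (w := fun y => Real.sqrt (-2 * φ y)) hT.le hXc
    (fun t _ => hXd t) hVpos' hspeed
  have htime := integral_inv_speed_eq_time (w := fun y => Real.sqrt (-2 * φ y)) hT.le hXc
    (fun t _ => hXd t) hVpos' hspeed
  rw [hX0, hXT] at hint htime
  obtain rfl : t₀ = T := ht₀.trans htime
  refine ⟨hint, hVpos 0 ⟨le_rfl, hT⟩, fun t ht => ⟨hVpos t ht, hE t⟩, ?_, hXT, hVT⟩
  refine strictMonoOn_of_deriv_pos (convex_Icc 0 _) hXc fun t ht => ?_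
  rw [interior_Icc] at ht
  exact (hXd t).deriv ▸ hVpos' t ht

/-- One-dimensional Hamiltonian dynamics: for a `C²` potential `φ` with `φ' ≥ 1/2`,
`φ(0) = 0`, starting from `x < 0` with velocity `v = √(−2φ(x))`, the first time the
velocity vanishes is `t₀ = ∫_x^0 dy/√(−2φ(y))`: the energy `V² + 2φ(X)` stays `0`,
`V > 0` on `[0,t₀)`, `X` increases strictly up to `X(t₀) = 0`, and `V(t₀) = 0`. -/
theorem one_dimensional_turning_time (φ : ℝ → ℝ) (hφ : ContDiff ℝ 2 φ)
    (hφ' : ∀ y : ℝ, (1/2 : ℝ) ≤ deriv φ y) (hφ0 : φ 0 = 0)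
    (x : ℝ) (hx : x < 0) (X V : ℝ → ℝ)
    (hX0 : X 0 = x) (hV0 : V 0 = Real.sqrt (-2 * φ x))
    (hXd : ∀ t : ℝ, HasDerivAt X (V t) t)
    (hVd : ∀ t : ℝ, HasDerivAt V (-(deriv φ (X t))) t)
    (t₀ : ℝ) (ht₀ : t₀ = ∫ y in x..(0:ℝ), (Real.sqrt (-2 * φ y))⁻¹) :
    IntervalIntegrable (fun y => (Real.sqrt (-2 * φ y))⁻¹) volume x 0 ∧
    0 < V 0 ∧
    (∀ t ∈ Ico (0:ℝ) t₀, 0 < V t ∧ V t ^ 2 + 2 * φ (X t) = 0) ∧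
    StrictMonoOn X (Icc 0 t₀) ∧
    X t₀ = 0 ∧ V t₀ = 0 :=
  one_dimensional_turning_time_general φ hφ' hφ0 x hx X V hX0 hV0 hXd hVd t₀ ht₀
end
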